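/- The subgroup Γ_C of SL(2,ℝ) generated by {M(α(n,k), r(n)) : n ≥ 1, 0 ≤ k ≤ 2^(n−1)−1} is not finitely generated: there is no finite subset of SL(2,ℝ) generating Γ_C. -/

import Mathlib

open UpperHalfPlane MatrixGroups

noncomputable section

/-- `s k = Σᵢ 2·tᵢ·3ⁱ` where `k = Σᵢ tᵢ·2ⁱ` is the binary expansion of `k`;
equivalently `s 0 = 0`, `s (2j) = 3·(s j)`, `s (2j+1) = 3·(s j) + 2`. -/
def s : ℕ → ℕ
  | 0 => 0
  | k + 1 =>
    if (k + 1) % 2 = 0 then 3 * s ((k + 1) / 2)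
    else 3 * s ((k + 1) / 2) + 2
decreasing_by all_goals (simp_wf; omega)

/-- The midpoint of the middle third removed at stage `n` from the `k`-th interval of
stage `n−1` of the middle-thirds construction on `[1,2]`. -/
def alphaC (n k : ℕ) : ℝ := 1 + (3 * s k + 1) / 3 ^ n + 1 / (2 * 3 ^ n)

/-- The common radius of the half-circles at stage `n`. -/
def radC (n : ℕ) : ℝ := 1 / (4 * 3 ^ n)

lemma radC_ne (n : ℕ) : radC n ≠ 0 := by unfold radC; positivity

/-- `N(β,β',r)` is the element of `SL(2,ℝ)` whose Möbius transformation has isometric circle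
the half-circle of radius `r` centered at `β`, mapped onto the half-circle of radius `r`
centered at `β'`. -/
def Nmat (β β' r : ℝ) (hr : r ≠ 0) : SL(2, ℝ) :=
  ⟨!![β' / r, -(β * β' + r ^ 2) / r; 1 / r, -β / r], by
    rw [Matrix.det_fin_two_of]; field_simp; ring⟩

/-- `M(α,r) := N(α, −α, r)`. -/
def Mmat (a r : ℝ) (hr : r ≠ 0) : SL(2, ℝ) := Nmat a (-a) r hr

/-- The subgroup of `SL(2,ℝ)` generated by the `M(α(n,k), r(n))`. -/
def ΓC : Subgroup SL(2, ℝ) :=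
  Subgroup.closure
    {g | ∃ n k : ℕ, 1 ≤ n ∧ k < 2 ^ (n - 1) ∧ g = Mmat (alphaC n k) (radC n) (radC_ne n)}

/-!
Every generator `M(α, r)` maps the outside of the half-disk of radius `r` about `α` into the
half-disk of radius `r` about `-α`, and its inverse does the reverse, because
`(M • z + α) * (z - α) = -r²`. The half-disks about the points `±α(n, k)` are pairwise disjoint:
the middle thirds removed in the Cantor construction are disjoint, and each disk sits well inside
the middle third whose midpoint is its center. By the ping-pong lemma the generators are a free
basis of `Γ_C`, and a free group of infinite rank is not finitely generated, since it has infinitely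
many homomorphisms to `ℤ/2` while a finite generating set allows only finitely many.
-/

open Pointwise

lemma s_eq_three_mul_s_div_two_add (k : ℕ) : s k = 3 * s (k / 2) + 2 * (k % 2) := by
  rcases k with _ | k
  · simp [s]
  · rw [s]
    split <;> omega

lemma s_injective : Function.Injective s
  | k, l, h => by
    by_cases hkl : k + l = 0
    · omega
    have hk := s_eq_three_mul_s_div_two_add k
    have hl := s_eq_three_mul_s_div_two_add l
    have : k / 2 = l / 2 := s_injective (by omega)
    omega
termination_by k l => k + l

lemma s_div_pow_mod_three_ne_one (l d : ℕ) : s l / 3 ^ d % 3 ≠ 1 := by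
  induction d generalizing l with
  | zero => have := s_eq_three_mul_s_div_two_add l; omega
  | succ d ih =>
    have hdiv : s l / 3 = s (l / 2) := by have := s_eq_three_mul_s_div_two_add l; omega
    rw [pow_succ', ← Nat.div_div_eq_div_mul, hdiv]
    exact ih _

/- In units of `3 ^ -(n + d + 1)`, the middle third removed at stage `n` from interval `k` is
`[3 ^ (d + 1) * (3 * s k + 1), 3 ^ (d + 1) * (3 * s k + 2)]`, and `3 * s l + 1` is the left end of
the one removed at stage `n + d + 1` from interval `l`. Falling into the former would make the
base-`3` digit `d` of `s l` equal to `1`. -/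
lemma three_mul_s_add_one_notMem_Ico (k l d : ℕ) :
    3 * s l + 1 ∉
      Set.Ico (3 ^ (d + 1) * (3 * s k + 1)) (3 ^ (d + 1) * (3 * s k + 1) + 3 ^ (d + 1)) := by
  rintro ⟨hlo, hhi⟩
  have hquot : (3 * s l + 1) / 3 ^ (d + 1) = 3 * s k + 1 :=
    Nat.div_eq_of_lt_le (by linarith) (by linarith)
  rw [pow_succ', ← Nat.div_div_eq_div_mul, show (3 * s l + 1) / 3 = s l by omega] at hquot
  exact s_div_pow_mod_three_ne_one l d (by omega)

lemma two_mul_radC_add_le_abs_alphaC_sub_of_lt {n m : ℕ} (k l : ℕ) (hnm : n < m) :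
    2 * (radC n + radC m) ≤ |alphaC n k - alphaC m l| := by
  obtain ⟨d, rfl⟩ : ∃ d, m = n + (d + 1) := ⟨m - n - 1, by omega⟩
  have hsep : 3 ^ (d + 1) * (3 * s k + 1) + 3 ^ (d + 1) ≤ 3 * s l + 1 ∨
      3 * s l + 1 + 1 ≤ 3 ^ (d + 1) * (3 * s k + 1) := by
    have := three_mul_s_add_one_notMem_Ico k l d
    rw [Set.mem_Ico, not_and_or, not_le, not_lt] at this
    omega
  have hα : alphaC n k - alphaC (n + (d + 1)) l = (2 * ((3 : ℝ) ^ (d + 1) * (3 * s k + 1)) +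
      3 ^ (d + 1) - 2 * (3 * s l + 1) - 1) / (2 * 3 ^ (n + (d + 1))) := by
    unfold alphaC; rw [pow_add]; field_simp; ring
  have hr : 2 * (radC n + radC (n + (d + 1))) =
      ((3 : ℝ) ^ (d + 1) + 1) / (2 * 3 ^ (n + (d + 1))) := by
    unfold radC; rw [pow_add]; field_simp; ring
  rw [hα, hr, abs_div, abs_of_pos (show (0 : ℝ) < 2 * 3 ^ (n + (d + 1)) by positivity)]
  gcongr
  rcases hsep with h | h
  · have h' : (3 : ℝ) ^ (d + 1) * (3 * s k + 1) + 3 ^ (d + 1) ≤ 3 * s l + 1 := by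
      exact_mod_cast h
    exact le_abs.mpr (Or.inr (by linarith))
  · have h' : (3 : ℝ) * s l + 1 + 1 ≤ 3 ^ (d + 1) * (3 * s k + 1) := by exact_mod_cast h
    exact le_abs.mpr (Or.inl (by linarith))

lemma two_mul_radC_add_le_abs_alphaC_sub_same_stage {n k l : ℕ} (hkl : k ≠ l) :
    2 * (radC n + radC n) ≤ |alphaC n k - alphaC n l| := by
  have hα : alphaC n k - alphaC n l = 3 * ((s k : ℝ) - s l) / 3 ^ n := by
    unfold alphaC; field_simp; ring
  have hr : 2 * (radC n + radC n) = 1 / 3 ^ n := by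
    unfold radC; field_simp; ring
  rw [hα, hr, abs_div, abs_of_pos (show (0 : ℝ) < 3 ^ n by positivity)]
  gcongr
  rcases lt_or_gt_of_ne (s_injective.ne hkl) with h | h
  · have h' : (s k : ℝ) + 1 ≤ s l := by exact_mod_cast h
    exact le_abs.mpr (Or.inr (by linarith))
  · have h' : (s l : ℝ) + 1 ≤ s k := by exact_mod_cast h
    exact le_abs.mpr (Or.inl (by linarith))

lemma two_mul_radC_add_le_abs_alphaC_sub {n m k l : ℕ} (h : (n, k) ≠ (m, l)) :
    2 * (radC n + radC m) ≤ |alphaC n k - alphaC m l| := by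
  rcases lt_trichotomy n m with hnm | rfl | hnm
  · exact two_mul_radC_add_le_abs_alphaC_sub_of_lt k l hnm
  · exact two_mul_radC_add_le_abs_alphaC_sub_same_stage (by simpa using h)
  · rw [add_comm, abs_sub_comm]
    exact two_mul_radC_add_le_abs_alphaC_sub_of_lt l k hnm

lemma radC_pos (n : ℕ) : 0 < radC n := by unfold radC; positivity

lemma radC_lt_alphaC (n k : ℕ) : radC n < alphaC n k := by
  have h : radC n < 1 + 1 / (2 * 3 ^ n) := by
    unfold radC
    have : 1 / (4 * (3 : ℝ) ^ n) ≤ 1 / (2 * 3 ^ n) := by gcongr; norm_num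
    linarith
  unfold alphaC
  have : (0 : ℝ) ≤ (3 * s k + 1) / 3 ^ n := by positivity
  linarith

lemma coe_Nmat_smul_sub_mul_sub (β β' r : ℝ) (hr : r ≠ 0) (z : ℍ) :
    ((Nmat β β' r hr • z : ℍ) - β' : ℂ) * (z - β) = -r ^ 2 := by
  have hz : (z : ℂ) - β ≠ 0 := sub_ne_zero.mpr (z.ne_ofReal β)
  have hrc : (r : ℂ) ≠ 0 := by exact_mod_cast hr
  rw [UpperHalfPlane.coe_specialLinearGroup_apply]
  have hden : (1 / r : ℝ) * (z : ℂ) + (-β / r : ℝ) = ((z : ℂ) - β) / r := by push_cast; ring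
  simp only [Nmat, Matrix.SpecialLinearGroup.coe_mk, Matrix.of_apply, Matrix.cons_val',
    Matrix.cons_val_zero, Matrix.cons_val_one, Matrix.empty_val', Matrix.cons_val_fin_one,
    Algebra.algebraMap_self, RingHom.id_apply, hden]
  push_cast
  field_simp
  ring

lemma dist_Nmat_smul_mul_dist (β β' r : ℝ) (hr : r ≠ 0) (z : ℍ) :
    dist ((Nmat β β' r hr • z : ℍ) : ℂ) β' * dist (z : ℂ) β = r ^ 2 := by
  rw [Complex.dist_eq, Complex.dist_eq, ← norm_mul, coe_Nmat_smul_sub_mul_sub]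
  simp

def halfDisk (c r : ℝ) : Set ℍ := {z | dist (z : ℂ) c ≤ r}

lemma halfDisk_nonempty (c : ℝ) {r : ℝ} (hr : 0 < r) : (halfDisk c r).Nonempty :=
  ⟨⟨c + r * Complex.I, by simp [hr]⟩, by simp [halfDisk, Complex.dist_eq, abs_of_pos hr]⟩

lemma disjoint_halfDisk {c c' r r' : ℝ} (h : r + r' < |c - c'|) :
    Disjoint (halfDisk c r) (halfDisk c' r') := by
  rw [Set.disjoint_left]
  intro z hz hz'
  have htri := dist_triangle_left (c : ℂ) c' z
  rw [Complex.dist_eq, ← Complex.ofReal_sub, Complex.norm_real, Real.norm_eq_abs] at htri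
  simp only [halfDisk, Set.mem_ofPred_eq] at hz hz'
  linarith

section Nmat

variable (β β' : ℝ) {r : ℝ} (hr : 0 < r)

lemma Nmat_smul_compl_halfDisk_subset : Nmat β β' r hr.ne' • (halfDisk β r)ᶜ ⊆ halfDisk β' r := by
  rintro _ ⟨z, hz, rfl⟩
  have h := dist_Nmat_smul_mul_dist β β' r hr.ne' z
  simp only [halfDisk, Set.mem_compl_iff, Set.mem_ofPred_eq, not_le] at hz ⊢
  nlinarith

lemma inv_Nmat_smul_compl_halfDisk_subset :
    (Nmat β β' r hr.ne')⁻¹ • (halfDisk β' r)ᶜ ⊆ halfDisk β r := by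
  rintro _ ⟨z, hz, rfl⟩
  have h := dist_Nmat_smul_mul_dist β β' r hr.ne' ((Nmat β β' r hr.ne')⁻¹ • z)
  rw [smul_inv_smul] at h
  simp only [halfDisk, Set.mem_compl_iff, Set.mem_ofPred_eq, not_le] at hz ⊢
  nlinarith

end Nmat

lemma FreeGroup.not_fg_of_infinite (ι : Type*) [Infinite ι] : ¬ Group.FG (FreeGroup ι) := by
  intro hfg
  obtain ⟨S, hS⟩ := hfg.out
  have : Finite (FreeGroup ι →* Multiplicative (ZMod 2)) :=
    Finite.of_injective (fun f (x : S) => f x) fun f g hfg =>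
      MonoidHom.eq_of_eqOn_dense hS fun x hx => congr_fun hfg ⟨x, hx⟩
  have : Finite (ι → Multiplicative (ZMod 2)) := Finite.of_equiv _ FreeGroup.lift.symm
  exact not_finite (ι → Multiplicative (ZMod 2))

lemma Subgroup.not_fg_closure_range_of_injective_lift {G ι : Type*} [Group G] [Infinite ι]
    {a : ι → G} (ha : Function.Injective (FreeGroup.lift a)) :
    ¬ (Subgroup.closure (Set.range a)).FG := by
  rw [← FreeGroup.range_lift_eq_closure, ← Group.fg_iff_subgroup_fg]
  intro h
  exact FreeGroup.not_fg_of_infinite ι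
    (Group.fg_of_surjective (f := (MonoidHom.ofInjective ha).symm.toMonoidHom)
      (MonoidHom.ofInjective ha).symm.surjective)

def stageIndices : Set (ℕ × ℕ) := {p | 1 ≤ p.1 ∧ p.2 < 2 ^ (p.1 - 1)}

instance : Infinite stageIndices :=
  (Set.infinite_of_injective_forall_mem (f := fun n : ℕ => (n + 1, 0))
    (fun _ _ h => by simpa using h) (fun n => by simp [stageIndices])).to_subtype

def genC (p : stageIndices) : SL(2, ℝ) := Mmat (alphaC p.1.1 p.1.2) (radC p.1.1) (radC_ne _)

lemma ΓC_eq_closure_range_genC : ΓC = Subgroup.closure (Set.range genC) := by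
  rw [ΓC]
  congr 1
  ext g
  constructor
  · rintro ⟨n, k, hn, hk, rfl⟩
    exact ⟨⟨(n, k), hn, hk⟩, rfl⟩
  · rintro ⟨⟨⟨n, k⟩, hn, hk⟩, rfl⟩
    exact ⟨n, k, hn, hk, rfl⟩

lemma injective_lift_genC : Function.Injective (FreeGroup.lift genC) := by
  have hsep (p q : stageIndices) (hpq : p ≠ q) :
      radC p.1.1 + radC q.1.1 < |alphaC p.1.1 p.1.2 - alphaC q.1.1 q.1.2| := by
    have := two_mul_radC_add_le_abs_alphaC_sub (Subtype.coe_ne_coe.mpr hpq)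
    linarith [radC_pos p.1.1, radC_pos q.1.1]
  refine FreeGroup.injective_lift_of_ping_pong genC
    (fun p => halfDisk (-alphaC p.1.1 p.1.2) (radC p.1.1))
    (fun p => halfDisk (alphaC p.1.1 p.1.2) (radC p.1.1))
    (fun p => halfDisk_nonempty _ (radC_pos _)) ?_ ?_ ?_
    (fun p => Nmat_smul_compl_halfDisk_subset _ _ (radC_pos _))
    (fun p => inv_Nmat_smul_compl_halfDisk_subset _ _ (radC_pos _))
  · intro p q hpq
    refine disjoint_halfDisk ?_
    rw [neg_sub_neg, abs_sub_comm]
    exact hsep p q hpq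
  · exact fun p q hpq => disjoint_halfDisk (hsep p q hpq)
  · intro p q
    refine disjoint_halfDisk (lt_abs.mpr (Or.inr ?_))
    linarith [radC_lt_alphaC p.1.1 p.1.2, radC_lt_alphaC q.1.1 q.1.2]

/-- `Γ_C` is not finitely generated. -/
theorem stmt_11 : ¬ ∃ F : Set SL(2, ℝ), F.Finite ∧ Subgroup.closure F = ΓC := by
  rintro ⟨F, hF, hFΓ⟩
  rw [ΓC_eq_closure_range_genC] at hFΓ
  exact Subgroup.not_fg_closure_range_of_injective_lift injective_lift_genC
    ((Subgroup.fg_iff _).mpr ⟨F, hFΓ, hF⟩)
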